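/- Let A = [0,R]² ⊂ ℝ² be the square of side R > 0, and let γ : [0,∞) → ℝ be a bounded measurable function. Then (1/|A|²)·∫_{A×A} γ(‖s − t‖) ds dt = ∫_0^{√2·R} γ(h)·f_square(h,R) dh, where ‖·‖ is the Euclidean norm. Equivalently, if S and T are independent random variables uniformly distributed on A, then E[γ(‖S−T‖)] = ∫_0^{√2·R} γ(h)·f_square(h,R) dh. -/

import Mathlib

open MeasureTheory

/-- Density of the distance between two independent uniform points in a square
of side `R`. -/
noncomputable def fsquare (h R : ℝ) : ℝ :=
  if h ≤ R then
    2 * Real.pi * h / R ^ 2 - 8 * h ^ 2 / R ^ 3 + 2 * h ^ 3 / R ^ 4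
  else
    (2 * h / R ^ 2) *
      (-2 - h ^ 2 / R ^ 2 + 3 * Real.sqrt (h ^ 2 / R ^ 2 - 1)
        + (h ^ 2 / R ^ 2 + 1) / Real.sqrt (h ^ 2 / R ^ 2 - 1)
        + 2 * Real.arcsin ((2 - h ^ 2 / R ^ 2) / (h ^ 2 / R ^ 2))
        - 4 / ((h ^ 2 / R ^ 2) *
            Real.sqrt (1 - (2 - h ^ 2 / R ^ 2) ^ 2 / (h ^ 2 / R ^ 2) ^ 2)))

/-- The square `[0,R]² ⊂ ℝ²`. -/
def squareRegion (R : ℝ) : Set (EuclideanSpace ℝ (Fin 2)) :=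
  {x | x 0 ∈ Set.Icc 0 R ∧ x 1 ∈ Set.Icc 0 R}

/-!
Substituting `v = s - t` turns the double integral into `∫ γ ‖v‖ * g v`, where
`g v = |A ∩ (A - v)| = (R - |v₀|)₊ (R - |v₁|)₊` is the covariogram of the square. In polar
coordinates this is `∫ γ r * r * J r` over `r > 0`, with `J r` the integral of `g` over the circle
of radius `r`. By symmetry `J r` is four times the integral over the first quadrant, where `g` is
the trigonometric polynomial `(R - r cos θ)(R - r sin θ)` for `arccos (R/r) ≤ θ ≤ arcsin (R/r)`
(for all `θ` when `r ≤ R`) and vanishes otherwise. Evaluating gives `r * J r = R⁴ f_square(r, R)`.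
-/

open Set Real

noncomputable def covariogram {G : Type*} [Add G] [MeasurableSpace G] (μ : Measure G)
    (A : Set G) (v : G) : ℝ :=
  μ.real (A ∩ (v + ·) ⁻¹' A)

theorem setIntegral_setIntegral_sub_eq_integral_mul_covariogram {G : Type*} [AddGroup G]
    [MeasurableSpace G] [MeasurableAdd₂ G] [MeasurableNeg G] (μ : Measure G) [SFinite μ]
    [μ.IsAddRightInvariant] {A : Set G} (hA : MeasurableSet A) (hμA : μ A ≠ ⊤) {f : G → ℝ}
    (hf : Measurable f) {C : ℝ} (hC : ∀ x, |f x| ≤ C) :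
    ∫ p in A, ∫ q in A, f (p - q) ∂μ ∂μ = ∫ v, f v * covariogram μ A v ∂μ := by
  have hbdd {g : G × G → G} (hg : Measurable g) :
      IntegrableOn (fun z => f (g z)) (A ×ˢ A) (μ.prod μ) := by
    refine Measure.integrableOn_of_bounded (M := C) ?_ (hf.comp hg).aestronglyMeasurable
      (ae_of_all _ fun z => hC _)
    rw [Measure.prod_prod]
    exact ENNReal.mul_ne_top hμA hμA
  set F : G × G → ℝ := (A ×ˢ A).indicator fun z => f (z.2 - z.1)
  set shear := (MeasurableEquiv.shearSubRight G).symm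
  have hshear : MeasurePreserving shear (μ.prod μ) (μ.prod μ) :=
    (measurePreserving_prod_sub μ μ).symm _
  have hFshear : Integrable (F ∘ shear) (μ.prod μ) :=
    hshear.integrable_comp_emb shear.measurableEmbedding |>.2
      ((integrable_indicator_iff (hA.prod hA)).2 (hbdd (measurable_snd.sub measurable_fst)))
  calc ∫ p in A, ∫ q in A, f (p - q) ∂μ ∂μ
      = ∫ q in A, ∫ p in A, f (p - q) ∂μ ∂μ := by
        refine integral_integral_swap ?_
        rw [Measure.prod_restrict]
        exact hbdd (measurable_fst.sub measurable_snd)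
    _ = ∫ z, F z ∂μ.prod μ := by
        rw [integral_indicator (hA.prod hA)]
        exact (setIntegral_prod _ (hbdd (measurable_snd.sub measurable_fst))).symm
    _ = ∫ z, F (shear z) ∂μ.prod μ := (hshear.integral_comp' F).symm
    _ = ∫ v, ∫ q, F (shear (q, v)) ∂μ ∂μ := integral_prod_symm _ hFshear
    _ = ∫ v, f v * covariogram μ A v ∂μ := by
        congr 1 with v
        have hslice : ∀ q, F (shear (q, v)) = (A ∩ (v + ·) ⁻¹' A).indicator (fun _ => f v) q := by
          intro q
          have : shear (q, v) = (q, v + q) := rfl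
          simp only [F, this, indicator, add_sub_cancel_right]
          rfl
        rw [integral_congr_ae (ae_of_all _ hslice), integral_indicator_const _
          (hA.inter (measurable_const_add v hA)), covariogram, smul_eq_mul, mul_comm]

noncomputable def tent (R x : ℝ) : ℝ := max (R - |x|) 0

theorem continuous_tent (R : ℝ) : Continuous (tent R) := by unfold tent; fun_prop

theorem tent_eq_zero {R x : ℝ} (h : R ≤ |x|) : tent R x = 0 := max_eq_right (by linarith)

theorem tent_of_abs_le {R x : ℝ} (h : |x| ≤ R) : tent R x = R - |x| := max_eq_left (by linarith)

theorem integrable_tent (R : ℝ) : Integrable (tent R) := by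
  refine (continuous_tent R).integrable_of_hasCompactSupport ?_
  refine HasCompactSupport.intro (isCompact_Icc (a := -|R|) (b := |R|)) fun x hx => tent_eq_zero ?_
  rw [mem_Icc, ← abs_le, not_le] at hx
  exact (le_abs_self R).trans hx.le

theorem tent_neg (R x : ℝ) : tent R (-x) = tent R x := by rw [tent, tent, abs_neg]

theorem covariogram_Icc (R a : ℝ) : covariogram volume (Icc 0 R) a = tent R a := by
  rw [covariogram, preimage_const_add_Icc, Icc_inter_Icc, Real.volume_real_Icc, tent]
  congr 1
  rcases le_total 0 a with h | h
  · rw [abs_of_nonneg h, max_eq_left (by linarith), min_eq_right (by linarith)]; ring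
  · rw [abs_of_nonpos h, max_eq_right (by linarith), min_eq_left (by linarith)]; ring

noncomputable def euclideanFinTwoEquiv : EuclideanSpace ℝ (Fin 2) ≃ᵐ ℝ × ℝ :=
  (MeasurableEquiv.toLp 2 (Fin 2 → ℝ)).symm.trans MeasurableEquiv.finTwoArrow

theorem measurePreserving_euclideanFinTwoEquiv :
    MeasurePreserving euclideanFinTwoEquiv :=
  (volume_preserving_finTwoArrow ℝ).comp
    (EuclideanSpace.volume_preserving_symm_measurableEquiv_toLp (Fin 2))

theorem EuclideanSpace.norm_fin_two (x : EuclideanSpace ℝ (Fin 2)) :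
    ‖x‖ = √(x 0 ^ 2 + x 1 ^ 2) := by
  simp [EuclideanSpace.norm_eq, Fin.sum_univ_two]

theorem volume_setOf_fin_two (s t : Set ℝ) :
    volume {x : EuclideanSpace ℝ (Fin 2) | x 0 ∈ s ∧ x 1 ∈ t} = volume s * volume t := by
  rw [show {x : EuclideanSpace ℝ (Fin 2) | x 0 ∈ s ∧ x 1 ∈ t} = euclideanFinTwoEquiv ⁻¹' (s ×ˢ t)
    from rfl, measurePreserving_euclideanFinTwoEquiv.measure_preimage_equiv,
    Measure.volume_eq_prod, Measure.prod_prod]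

theorem covariogram_squareRegion (R : ℝ) (v : EuclideanSpace ℝ (Fin 2)) :
    covariogram volume (squareRegion R) v = tent R (v 0) * tent R (v 1) := by
  rw [← covariogram_Icc, ← covariogram_Icc]
  simp only [covariogram, measureReal_def, ← ENNReal.toReal_mul, ← volume_setOf_fin_two]
  congr 2
  ext x
  simp only [squareRegion, mem_inter_iff, mem_preimage, mem_ofPred_eq, PiLp.add_apply]
  tauto

theorem integrableOn_polarCoord_target {f : ℝ × ℝ → ℝ} (hf : Integrable f) :
    IntegrableOn (fun p => p.1 * f (polarCoord.symm p)) polarCoord.target := by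
  have hmeas : MeasurableSet polarCoord.target := polarCoord.open_target.measurableSet
  have h := (integrableOn_image_iff_integrableOn_abs_det_fderiv_smul volume hmeas
    (fun p _ => (hasFDerivAt_polarCoord_symm p).hasFDerivWithinAt) polarCoord.symm.injOn f).1
    (polarCoord.symm_image_target_eq_source ▸ hf.integrableOn)
  simp_rw [det_fderivPolarCoordSymm, smul_eq_mul] at h
  exact h.congr_fun (fun p hp => by simp only [abs_of_pos (mem_Ioi.1 hp.1)]) hmeas

theorem integral_eq_integral_Ioi_mul_integral_Ioo {f : ℝ × ℝ → ℝ} (hf : Integrable f) :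
    ∫ p, f p = ∫ r in Ioi 0, r * ∫ θ in Ioo (-π) π, f (r * cos θ, r * sin θ) := by
  have h := integrableOn_polarCoord_target hf
  rw [polarCoord_target, Measure.volume_eq_prod] at h
  rw [← integral_comp_polarCoord_symm, polarCoord_target, Measure.volume_eq_prod]
  simp only [smul_eq_mul]
  rw [setIntegral_prod _ h]
  simp_rw [integral_const_mul]
  rfl

theorem continuous_tent_mul_tent (R r : ℝ) :
    Continuous fun θ => tent R (r * cos θ) * tent R (r * sin θ) := by
  unfold tent; fun_prop

noncomputable def angularCovariogram (R r : ℝ) : ℝ :=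
  ∫ θ in Ioo (-π) π, tent R (r * cos θ) * tent R (r * sin θ)

theorem angularCovariogram_eq_four_mul (R r : ℝ) :
    angularCovariogram R r = 4 * ∫ θ in 0..π / 2, tent R (r * cos θ) * tent R (r * sin θ) := by
  have hg : Function.Periodic (fun θ => tent R (r * cos θ) * tent R (r * sin θ)) (π / 2) :=
    fun θ => by simp only [cos_add_pi_div_two, sin_add_pi_div_two, mul_neg, tent_neg, mul_comm]
  have h := hg.intervalIntegral_add_zsmul_eq 4 (-π)
    fun a b => (continuous_tent_mul_tent R r).intervalIntegrable a b
  rw [hg.intervalIntegral_add_eq (-π) 0, zero_add, show -π + (4 : ℤ) • (π / 2) = π by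
    simp only [zsmul_eq_mul]; push_cast; ring] at h
  rw [angularCovariogram, ← integral_Ioc_eq_integral_Ioo,
    ← intervalIntegral.integral_of_le (by linarith [pi_pos]), h]
  simp only [zsmul_eq_mul, Int.cast_ofNat]

noncomputable def cornerPrimitive (R r θ : ℝ) : ℝ :=
  R ^ 2 * θ - R * r * sin θ + R * r * cos θ + r ^ 2 / 2 * sin θ ^ 2

theorem integral_sub_mul_sub (R r α β : ℝ) :
    ∫ θ in α..β, (R - r * cos θ) * (R - r * sin θ)
      = cornerPrimitive R r β - cornerPrimitive R r α := by
  refine intervalIntegral.integral_eq_sub_of_hasDerivAt (fun θ _ => ?_)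
    (Continuous.intervalIntegrable (by fun_prop) _ _)
  have := ((((hasDerivAt_id θ).const_mul (R ^ 2)).sub ((hasDerivAt_sin θ).const_mul (R * r))).add
    ((hasDerivAt_cos θ).const_mul (R * r))).add (((hasDerivAt_sin θ).pow 2).const_mul (r ^ 2 / 2))
  convert this using 1
  · ext; simp [cornerPrimitive]
  · push_cast; ring

theorem integral_tent_mul_tent_of_le {R r α β : ℝ} (hr : 0 ≤ r) (hα : 0 ≤ α) (hαβ : α ≤ β)
    (hβ : β ≤ π / 2) (hcos : r * cos α ≤ R) (hsin : r * sin β ≤ R) :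
    ∫ θ in α..β, tent R (r * cos θ) * tent R (r * sin θ)
      = ∫ θ in α..β, (R - r * cos θ) * (R - r * sin θ) := by
  refine intervalIntegral.integral_congr fun θ hθ => ?_
  rw [uIcc_of_le hαβ] at hθ
  obtain ⟨hαθ, hθβ⟩ := hθ
  have hθ0 : 0 ≤ θ := hα.trans hαθ
  have hθπ : θ ≤ π / 2 := hθβ.trans hβ
  have hcos0 : 0 ≤ r * cos θ := mul_nonneg hr (cos_nonneg_of_mem_Icc ⟨by linarith [pi_pos], hθπ⟩)
  have hsin0 : 0 ≤ r * sin θ :=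
    mul_nonneg hr (sin_nonneg_of_nonneg_of_le_pi hθ0 (by linarith [pi_pos]))
  have hcosθ : r * cos θ ≤ R := le_trans (mul_le_mul_of_nonneg_left
    (cos_le_cos_of_nonneg_of_le_pi hα (by linarith [pi_pos]) hαθ) hr) hcos
  have hsinθ : r * sin θ ≤ R := le_trans (mul_le_mul_of_nonneg_left
    (sin_le_sin_of_le_of_le_pi_div_two (by linarith [pi_pos]) hβ hθβ) hr) hsin
  simp only [tent_of_abs_le, abs_of_nonneg, hcos0, hsin0, hcosθ, hsinθ]

theorem angularCovariogram_of_le {R r : ℝ} (hr : 0 ≤ r) (hrR : r ≤ R) :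
    angularCovariogram R r = 2 * π * R ^ 2 - 8 * R * r + 2 * r ^ 2 := by
  rw [angularCovariogram_eq_four_mul, integral_tent_mul_tent_of_le hr le_rfl (by positivity) le_rfl
    (by simpa using hrR) (by simpa using hrR), integral_sub_mul_sub]
  simp only [cornerPrimitive, sin_pi_div_two, cos_pi_div_two, sin_zero, cos_zero]
  ring

theorem arccos_le_arcsin {x : ℝ} (hx0 : 0 ≤ x) (hx1 : x ≤ 1) (hx : 1 ≤ 2 * x ^ 2) :
    arccos x ≤ arcsin x := by
  have hb : arcsin x ∈ Icc 0 π :=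
    ⟨arcsin_nonneg.2 hx0, by linarith [arcsin_le_pi_div_two x, pi_pos]⟩
  rw [← strictAntiOn_cos.le_iff_ge hb ⟨arccos_nonneg x, arccos_le_pi x⟩,
    cos_arccos (by linarith) hx1, cos_arcsin]
  exact sqrt_le_iff.2 ⟨hx0, by linarith⟩

theorem integral_tent_mul_tent_of_lt_of_le {R r : ℝ} (hR : 0 < R) (hRr : R < r)
    (hr : r ≤ √2 * R) :
    ∫ θ in 0..π / 2, tent R (r * cos θ) * tent R (r * sin θ)
      = cornerPrimitive R r (arcsin (R / r)) - cornerPrimitive R r (arccos (R / r)) := by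
  have hr0 : 0 < r := hR.trans hRr
  set x := R / r with hx
  have hxr : r * x = R := by rw [hx]; field_simp
  have hx0 : 0 < x := div_pos hR hr0
  have hx1 : x < 1 := (div_lt_one hr0).2 hRr
  have hx2 : 1 ≤ 2 * x ^ 2 := by
    refine le_of_mul_le_mul_left ?_ (by positivity : 0 < r ^ 2)
    calc r ^ 2 * 1 ≤ (√2 * R) ^ 2 := by rw [mul_one]; exact pow_le_pow_left₀ hr0.le hr 2
      _ = r ^ 2 * (2 * x ^ 2) := by rw [mul_pow, sq_sqrt zero_le_two, ← hxr]; ring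
  set a := arccos x
  set b := arcsin x
  have hab : a ≤ b := arccos_le_arcsin hx0.le hx1.le hx2
  have hb : b ≤ π / 2 := arcsin_le_pi_div_two x
  set g := fun θ => tent R (r * cos θ) * tent R (r * sin θ)
  have hg : Continuous g := continuous_tent_mul_tent R r
  have hzero {α β : ℝ} (hαβ : α ≤ β) (h : ∀ θ ∈ Icc α β, g θ = 0) : ∫ θ in α..β, g θ = 0 := by
    rw [intervalIntegral.integral_congr (g := fun _ => 0) (by rwa [uIcc_of_le hαβ]),
      intervalIntegral.integral_zero]
  have hfirst : ∫ θ in 0..a, g θ = 0 := hzero (arccos_nonneg x) fun θ hθ => by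
    have : x ≤ cos θ :=
      cos_arccos (by linarith) hx1.le ▸ cos_le_cos_of_nonneg_of_le_pi hθ.1 (arccos_le_pi x) hθ.2
    refine mul_eq_zero_of_left (tent_eq_zero ?_) _
    rw [abs_of_nonneg (by nlinarith)]
    nlinarith
  have hlast : ∫ θ in b..π / 2, g θ = 0 := hzero hb fun θ hθ => by
    have : x ≤ sin θ := sin_arcsin (by linarith) hx1.le ▸
      sin_le_sin_of_le_of_le_pi_div_two (neg_pi_div_two_le_arcsin x) hθ.2 hθ.1
    refine mul_eq_zero_of_right _ (tent_eq_zero ?_)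
    rw [abs_of_nonneg (by nlinarith)]
    nlinarith
  have hmid : ∫ θ in a..b, g θ = cornerPrimitive R r b - cornerPrimitive R r a := by
    rw [integral_tent_mul_tent_of_le hr0.le (arccos_nonneg x) hab hb
      (by rw [cos_arccos (by linarith) hx1.le, hxr]) (by rw [sin_arcsin (by linarith) hx1.le, hxr]),
      integral_sub_mul_sub]
  rw [← intervalIntegral.integral_add_adjacent_intervals (hg.intervalIntegrable 0 a)
      (hg.intervalIntegrable a _), ← intervalIntegral.integral_add_adjacent_intervals
      (hg.intervalIntegrable a b) (hg.intervalIntegrable b _), hfirst, hmid, hlast, zero_add,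
    add_zero]

theorem angularCovariogram_of_lt_of_le {R r : ℝ} (hR : 0 < R) (hRr : R < r) (hr : r ≤ √2 * R) :
    angularCovariogram R r = 8 * R ^ 2 * arcsin (R / r) + 8 * R * r * √(1 - (R / r) ^ 2)
      - 2 * π * R ^ 2 - 4 * R ^ 2 - 2 * r ^ 2 := by
  have hr0 : 0 < r := hR.trans hRr
  have hxr : r * (R / r) = R := by field_simp
  have hx0 : 0 ≤ R / r := div_nonneg hR.le hr0.le
  have hx1 : R / r ≤ 1 := (div_le_one hr0).2 hRr.le
  have hs2 : √(1 - (R / r) ^ 2) ^ 2 = 1 - (R / r) ^ 2 := sq_sqrt (by nlinarith)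
  rw [angularCovariogram_eq_four_mul, integral_tent_mul_tent_of_lt_of_le hR hRr hr, cornerPrimitive,
    cornerPrimitive, cos_arccos (by linarith) hx1, sin_arccos, sin_arcsin (by linarith) hx1,
    cos_arcsin, arccos_eq_pi_div_two_sub_arcsin]
  linear_combination (-2 * r ^ 2) * hs2 + (4 * (r * (R / r) - R)) * hxr

theorem tent_mul_tent_eq_zero {R x y : ℝ} (h : 2 * R ^ 2 < x ^ 2 + y ^ 2) :
    tent R x * tent R y = 0 := by
  by_contra hne
  have hx : |x| < R := not_le.1 fun h' => hne (by rw [tent_eq_zero h', zero_mul])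
  have hy : |y| < R := not_le.1 fun h' => hne (by rw [tent_eq_zero h', mul_zero])
  nlinarith [abs_nonneg x, abs_nonneg y, sq_abs x, sq_abs y]

theorem angularCovariogram_of_lt {R r : ℝ} (hR : 0 ≤ R) (hr : √2 * R < r) :
    angularCovariogram R r = 0 := by
  have hr2 : 2 * R ^ 2 < r ^ 2 := by
    calc 2 * R ^ 2 = (√2 * R) ^ 2 := by rw [mul_pow, sq_sqrt zero_le_two]
      _ < r ^ 2 := pow_lt_pow_left₀ hr (by positivity) two_ne_zero
  have hzero : ∀ θ, tent R (r * cos θ) * tent R (r * sin θ) = 0 := fun θ =>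
    tent_mul_tent_eq_zero (by nlinarith [sin_sq_add_cos_sq θ])
  simp [angularCovariogram, hzero]

theorem arcsin_two_mul_sq_sub_one {x : ℝ} (hx0 : 0 ≤ x) (hx1 : x ≤ 1) :
    arcsin (2 * x ^ 2 - 1) = 2 * arcsin x - π / 2 := by
  have hsin : sin (2 * arcsin x - π / 2) = 2 * x ^ 2 - 1 := by
    rw [sin_sub_pi_div_two, cos_two_mul, cos_arcsin, sq_sqrt (by nlinarith)]
    ring
  rw [← hsin, arcsin_sin] <;> linarith [arcsin_nonneg.2 hx0, arcsin_le_pi_div_two x]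

theorem fsquare_of_lt {h R : ℝ} (hR : 0 < R) (hRh : R < h) :
    fsquare h R = h / R ^ 4 * (8 * R ^ 2 * arcsin (R / h) + 8 * R * h * √(1 - (R / h) ^ 2)
      - 2 * π * R ^ 2 - 4 * R ^ 2 - 2 * h ^ 2) := by
  have hh : 0 < h := hR.trans hRh
  set x := R / h with hx
  set s := √(1 - x ^ 2)
  have hx0 : 0 < x := div_pos hR hh
  have hx1 : x < 1 := (div_lt_one hh).2 hRh
  have hxh : h * x = R := by rw [hx]; field_simp
  have hs2 : s ^ 2 = 1 - x ^ 2 := sq_sqrt (by nlinarith)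
  have hs0 : 0 < s := sqrt_pos.2 (by nlinarith)
  have harcsin : arcsin (2 * x ^ 2 - 1) = 2 * arcsin x - π / 2 :=
    arcsin_two_mul_sq_sub_one hx0.le hx1.le
  clear_value x s
  set b := h ^ 2 / R ^ 2 with hb
  have hb0 : 0 < b := by positivity
  have hbs : b - 1 = (h * s / R) ^ 2 := by
    rw [hb]; field_simp; linear_combination (-h ^ 2) * hs2 + (h * x + R) * hxh
  clear_value b
  have hsq1 : √(b - 1) = h * s / R := by rw [hbs]; exact sqrt_sq (by positivity)
  have hsq2 : √(1 - (2 - b) ^ 2 / b ^ 2) = 2 * (h * s / R) / b := by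
    rw [show 1 - (2 - b) ^ 2 / b ^ 2 = (2 * (h * s / R) / b) ^ 2 by
      rw [div_pow, mul_pow, ← hbs]; field_simp; ring]
    exact sqrt_sq (by positivity)
  have harg : (2 - b) / b = 2 * x ^ 2 - 1 := by
    rw [hb, ← hxh]; field_simp
  rw [fsquare, if_neg hRh.not_ge, ← hb, hsq1, hsq2, harg, harcsin, hb, ← hxh]
  field_simp
  linear_combination (-2 * x) * hs2

theorem fsquare_eq_mul_angularCovariogram {h R : ℝ} (hR : 0 < R) (hh : 0 ≤ h)
    (hhR : h ≤ √2 * R) : fsquare h R = h * angularCovariogram R h / R ^ 4 := by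
  rcases le_or_gt h R with hle | hlt
  · rw [fsquare, if_pos hle, angularCovariogram_of_le hh hle]
    field_simp
  · rw [fsquare_of_lt hR hlt, angularCovariogram_of_lt_of_le hR hlt hhR]
    ring

theorem integral_Ioi_mul_angularCovariogram {R : ℝ} (hR : 0 < R) (γ : ℝ → ℝ) :
    ∫ r in Ioi 0, γ r * (r * angularCovariogram R r)
      = R ^ 4 * ∫ h in Icc 0 (√2 * R), γ h * fsquare h R := by
  rw [integral_Icc_eq_integral_Ioc, ← integral_const_mul,
    setIntegral_eq_of_subset_of_forall_sdiff_eq_zero measurableSet_Ioi Ioc_subset_Ioi_self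
      fun r hr => by rw [angularCovariogram_of_lt hR.le (not_le.1 fun h => hr.2 ⟨hr.1, h⟩)]; ring]
  refine setIntegral_congr_fun measurableSet_Ioc fun r hr => ?_
  rw [fsquare_eq_mul_angularCovariogram hR hr.1.le hr.2]
  field_simp

theorem integral_mul_tent_mul_tent_eq_integral_Ioi {R : ℝ} {γ : ℝ → ℝ} (hγ : Measurable γ)
    {M : ℝ} (hM : ∀ h, 0 ≤ h → |γ h| ≤ M) :
    ∫ v : EuclideanSpace ℝ (Fin 2), γ ‖v‖ * (tent R (v 0) * tent R (v 1))
      = ∫ r in Ioi 0, γ r * (r * angularCovariogram R r) := by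
  set g := fun p : ℝ × ℝ => γ √(p.1 ^ 2 + p.2 ^ 2) * (tent R p.1 * tent R p.2)
  have hg : Integrable g :=
    ((integrable_tent R).mul_prod (integrable_tent R)).bdd_mul (c := M)
      (hγ.comp (by fun_prop)).aestronglyMeasurable (ae_of_all _ fun p => hM _ (sqrt_nonneg _))
  have hpolar (r : ℝ) (hr : r ∈ Ioi 0) :
      r * ∫ θ in Ioo (-π) π, g (r * cos θ, r * sin θ) = γ r * (r * angularCovariogram R r) := by
    have hnorm (θ : ℝ) : √((r * cos θ) ^ 2 + (r * sin θ) ^ 2) = r := by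
      rw [show (r * cos θ) ^ 2 + (r * sin θ) ^ 2 = r ^ 2 by
        linear_combination r ^ 2 * cos_sq_add_sin_sq θ, sqrt_sq (le_of_lt hr)]
    simp only [g, hnorm, integral_const_mul, angularCovariogram]
    ring
  calc ∫ v : EuclideanSpace ℝ (Fin 2), γ ‖v‖ * (tent R (v 0) * tent R (v 1))
      = ∫ v, g (euclideanFinTwoEquiv v) := by simp only [EuclideanSpace.norm_fin_two]; rfl
    _ = ∫ p, g p := measurePreserving_euclideanFinTwoEquiv.integral_comp' g
    _ = _ := by
      rw [integral_eq_integral_Ioi_mul_integral_Ioo hg]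
      exact setIntegral_congr_fun measurableSet_Ioi hpolar

/-- For a square `A` of side `R` and a bounded measurable `γ`, the normalized double
integral of `γ(‖s - t‖)` reduces to a one-dimensional integral against `fsquare`. -/
theorem stmt_8 (R : ℝ) (hR : 0 < R) (γ : ℝ → ℝ)
    (hmeas : Measurable γ) (hbdd : ∃ M, ∀ h : ℝ, 0 ≤ h → |γ h| ≤ M) :
    ((volume (squareRegion R)).toReal ^ 2)⁻¹ *
        (∫ s in squareRegion R, ∫ t in squareRegion R, γ ‖s - t‖)
      = ∫ h in Set.Icc 0 (Real.sqrt 2 * R), γ h * fsquare h R := by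
  obtain ⟨M, hM⟩ := hbdd
  have hvol : volume (squareRegion R) = ENNReal.ofReal R * ENNReal.ofReal R := by
    rw [squareRegion, volume_setOf_fin_two, volume_Icc, sub_zero]
  have hmeasA : MeasurableSet (squareRegion R) :=
    euclideanFinTwoEquiv.measurable (measurableSet_Icc.prod measurableSet_Icc)
  rw [setIntegral_setIntegral_sub_eq_integral_mul_covariogram (f := fun v => γ ‖v‖) volume hmeasA
      (by rw [hvol]; finiteness) (hmeas.comp measurable_norm) (fun v => hM _ (norm_nonneg v))]
  simp only [covariogram_squareRegion]
  rw [integral_mul_tent_mul_tent_eq_integral_Ioi hmeas hM, integral_Ioi_mul_angularCovariogram hR,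
    hvol, ENNReal.toReal_mul, ENNReal.toReal_ofReal hR.le]
  field_simp
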